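/- arXiv:2506.13106 — 2 statements merged into one kernel-verified Lean document; each statement's English description precedes it below -/
import Mathlib

section
/- For a symmetric positive definite matrix P, vector q and scalar γ > 0, with K = P·q·(γ + qᵀPq)⁻¹ and P₊⁻¹ = γP⁻¹ + qqᵀ, the closed-loop matrix A = I − K·qᵀ satisfies, for any vector e: eᵀ·Aᵀ·P₊⁻¹·A·e = γ²·eᵀ·P⁻¹·P₊·P⁻¹·e ≤ γ·eᵀ·P⁻¹·e. -/
/-!
Write `M = γP⁻¹ + qqᵀ`, so that `P₊ = M⁻¹`, and `c = γ + qᵀPq > 0`. Since `M (Pq) = c q`, the gain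
satisfies `MK = q`, hence `MA = M - qqᵀ = γP⁻¹`. As `M` and `P⁻¹` are symmetric this gives
`AᵀMA = γP⁻¹A`, which equals `γ²P⁻¹P₊P⁻¹` because `A = γM⁻¹P⁻¹`, and equals `γ(P⁻¹ - c⁻¹qqᵀ)`
because `P⁻¹K = c⁻¹q`; the last form is visibly at most `γP⁻¹`.
-/

open Matrix

variable {ι : Type*} [Fintype ι]

lemma rls_denominator_pos {P : Matrix ι ι ℝ} {γ : ℝ} (q : ι → ℝ) (hP : P.PosSemidef)
    (hγ : 0 < γ) : 0 < γ + q ⬝ᵥ P *ᵥ q :=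
  add_pos_of_pos_of_nonneg hγ (by simpa using hP.dotProduct_mulVec_nonneg q)

variable [DecidableEq ι] (P : Matrix ι ι ℝ) (q : ι → ℝ) (γ : ℝ)

noncomputable def rlsInformation : Matrix ι ι ℝ := γ • P⁻¹ + vecMulVec q q

noncomputable def rlsGain : ι → ℝ := (γ + q ⬝ᵥ P *ᵥ q)⁻¹ • P *ᵥ q

noncomputable def rlsClosedLoop : Matrix ι ι ℝ := 1 - vecMulVec (rlsGain P q γ) q

variable {P γ}

lemma rlsInformation_posDef (hP : P.PosDef) (hγ : 0 < γ) : (rlsInformation P q γ).PosDef := by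
  have hqq : (vecMulVec q q).PosSemidef := by
    simpa using posSemidef_vecMulVec_self_star q
  exact (hP.inv.smul hγ).add_posSemidef hqq

lemma rlsInformation_mulVec_mulVec (hP : IsUnit P.det) :
    rlsInformation P q γ *ᵥ (P *ᵥ q) = (γ + q ⬝ᵥ P *ᵥ q) • q := by
  rw [rlsInformation, add_mulVec, smul_mulVec, mulVec_mulVec, nonsing_inv_mul P hP, one_mulVec,
    vecMulVec_mulVec, op_smul_eq_smul, add_smul]

lemma rlsInformation_mul_rlsClosedLoop (hP : IsUnit P.det) (hc : γ + q ⬝ᵥ P *ᵥ q ≠ 0) :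
    rlsInformation P q γ * rlsClosedLoop P q γ = γ • P⁻¹ := by
  have hgain : rlsInformation P q γ *ᵥ rlsGain P q γ = q := by
    rw [rlsGain, mulVec_smul, rlsInformation_mulVec_mulVec q hP, smul_smul, inv_mul_cancel₀ hc,
      one_smul]
  rw [rlsClosedLoop, Matrix.mul_sub, Matrix.mul_one, mul_vecMulVec, hgain, rlsInformation,
    add_sub_cancel_right]

lemma transpose_rlsClosedLoop_mul_rlsInformation_mul (hP : P.PosDef) (hγ : 0 < γ) :
    (rlsClosedLoop P q γ)ᵀ * rlsInformation P q γ * rlsClosedLoop P q γ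
      = γ • (P⁻¹ * rlsClosedLoop P q γ) := by
  have hPdet : IsUnit P.det := (isUnit_iff_isUnit_det P).mp hP.isUnit
  have hMA := rlsInformation_mul_rlsClosedLoop q hPdet (rls_denominator_pos q hP.posSemidef hγ).ne'
  rw [← (isHermitian_iff_isSymm.mp (rlsInformation_posDef q hP hγ).isHermitian).eq,
    ← transpose_mul, hMA, transpose_smul, (isHermitian_iff_isSymm.mp hP.inv.isHermitian).eq,
    smul_mul]

lemma inv_mul_rlsClosedLoop (hP : IsUnit P.det) :
    P⁻¹ * rlsClosedLoop P q γ = P⁻¹ - (γ + q ⬝ᵥ P *ᵥ q)⁻¹ • vecMulVec q q := by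
  rw [rlsClosedLoop, Matrix.mul_sub, Matrix.mul_one, mul_vecMulVec, rlsGain, mulVec_smul,
    mulVec_mulVec, nonsing_inv_mul P hP, one_mulVec, smul_vecMulVec]

lemma dotProduct_inv_mul_rlsClosedLoop_mulVec_le (hP : IsUnit P.det)
    (hc : 0 ≤ γ + q ⬝ᵥ P *ᵥ q) (e : ι → ℝ) :
    e ⬝ᵥ (P⁻¹ * rlsClosedLoop P q γ) *ᵥ e ≤ e ⬝ᵥ P⁻¹ *ᵥ e := by
  rw [inv_mul_rlsClosedLoop q hP, sub_mulVec, dotProduct_sub, sub_le_self_iff, smul_mulVec,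
    dotProduct_smul, vecMulVec_mulVec, op_smul_eq_smul, dotProduct_smul, dotProduct_comm e q,
    smul_eq_mul, smul_eq_mul]
  exact mul_nonneg (inv_nonneg.mpr hc) (mul_self_nonneg _)


theorem rls_lyapunov_contraction_general
    {n : ℕ} (P Pplus A : Matrix (Fin n) (Fin n) ℝ) (q K : Fin n → ℝ) (γ : ℝ)
    (hP : P.PosDef) (hγ : 0 < γ)
    (hPplus : Pplus = (γ • P⁻¹ + Matrix.vecMulVec q q)⁻¹)
    (hK : K = (γ + q ⬝ᵥ P.mulVec q)⁻¹ • P.mulVec q)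
    (hA : A = 1 - Matrix.vecMulVec K q) :
    ∀ e : Fin n → ℝ,
      e ⬝ᵥ (Aᵀ * Pplus⁻¹ * A).mulVec e
        = γ ^ 2 * (e ⬝ᵥ (P⁻¹ * Pplus * P⁻¹).mulVec e) ∧
      e ⬝ᵥ (Aᵀ * Pplus⁻¹ * A).mulVec e ≤ γ * (e ⬝ᵥ P⁻¹.mulVec e) := by
  intro e
  have hPdet : IsUnit P.det := (isUnit_iff_isUnit_det P).mp hP.isUnit
  have hMdet := (isUnit_iff_isUnit_det _).mp (rlsInformation_posDef q hP hγ).isUnit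
  have hc := rls_denominator_pos q hP.posSemidef hγ
  obtain rfl : A = rlsClosedLoop P q γ := by rw [hA, hK]; rfl
  obtain rfl : Pplus = (rlsInformation P q γ)⁻¹ := hPplus
  rw [nonsing_inv_nonsing_inv _ hMdet, transpose_rlsClosedLoop_mul_rlsInformation_mul q hP hγ,
    smul_mulVec, dotProduct_smul, smul_eq_mul]
  refine ⟨?_, mul_le_mul_of_nonneg_left
    (dotProduct_inv_mul_rlsClosedLoop_mulVec_le q hPdet hc.le e) hγ.le⟩
  have hclosedLoop : rlsClosedLoop P q γ = (rlsInformation P q γ)⁻¹ * (γ • P⁻¹) := by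
    rw [← rlsInformation_mul_rlsClosedLoop q hPdet hc.ne', nonsing_inv_mul_cancel_left _ _ hMdet]
  simp only [hclosedLoop, Matrix.mul_smul, smul_mulVec, dotProduct_smul, smul_eq_mul, sq,
    mul_assoc]

/-- The RLS update contracts the Lyapunov function `V = eᵀP⁻¹e` by the factor `γ`. -/
theorem rls_lyapunov_contraction
    {n : ℕ} (P Pplus A : Matrix (Fin n) (Fin n) ℝ) (q K : Fin n → ℝ) (γ : ℝ)
    (hP : P.PosDef) (hPs : P.IsSymm) (hγ : 0 < γ)
    (hPplus : Pplus = (γ • P⁻¹ + Matrix.vecMulVec q q)⁻¹)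
    (hK : K = (γ + q ⬝ᵥ P.mulVec q)⁻¹ • P.mulVec q)
    (hA : A = 1 - Matrix.vecMulVec K q) :
    ∀ e : Fin n → ℝ,
      e ⬝ᵥ (Aᵀ * Pplus⁻¹ * A).mulVec e
        = γ ^ 2 * (e ⬝ᵥ (P⁻¹ * Pplus * P⁻¹).mulVec e) ∧
      e ⬝ᵥ (Aᵀ * Pplus⁻¹ * A).mulVec e ≤ γ * (e ⬝ᵥ P⁻¹.mulVec e) :=
  rls_lyapunov_contraction_general P Pplus A q K γ hP hγ hPplus hK hA
end

section
/- If P₊⁻¹ = γ·P⁻¹ + q·qᵀ with P symmetric positive definite, q a vector and 0 < γ, then P₊ is symmetric positive definite and P₊ ⪯ γ⁻¹·P (in the Loewner order). -/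
/-!
Inversion reverses the Loewner order on positive definite matrices: if `0 ≺ A ⪯ B`, the block
matrix `[B 1; 1 A⁻¹]` has the Schur complements `B - A` and `A⁻¹ - B⁻¹`, so it is positive
semidefinite and hence so is `A⁻¹ - B⁻¹`. Apply this to `γ P⁻¹ ⪯ γ P⁻¹ + q qᵀ`.
-/

open Matrix MatrixOrder
open scoped ComplexOrder

namespace Matrix

variable {𝕜 m : Type*} [RCLike 𝕜] [Fintype m] [DecidableEq m]

theorem PosDef.inv_le_inv {A B : Matrix m m 𝕜} (hA : A.PosDef) (hAB : A ≤ B) : B⁻¹ ≤ A⁻¹ := by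
  have hB : B.PosDef := by simpa using hA.add_posSemidef hAB
  have := hA.isUnit.invertible
  have := hB.isUnit.invertible
  have := hA.inv.isUnit.invertible
  have hblocks : (fromBlocks B 1 1 A⁻¹).PosSemidef := by
    simpa using (PosDef.fromBlocks₂₂ B (1 : Matrix m m 𝕜) hA.inv).mpr
      (by simpa [inv_inv_of_invertible] using le_iff.mp hAB)
  simpa [le_iff] using (PosDef.fromBlocks₁₁ (1 : Matrix m m 𝕜) A⁻¹ hB).mp
    (by simpa using hblocks)

end Matrix

theorem rls_covariance_update_loewner_general
    {n : ℕ} (P Pplus : Matrix (Fin n) (Fin n) ℝ) (q : Fin n → ℝ) (γ : ℝ)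
    (hP : P.PosDef) (hγ : 0 < γ)
    (hPplus : Pplus = (γ • P⁻¹ + Matrix.vecMulVec q q)⁻¹) :
    Pplus.PosDef ∧ Pplus.IsSymm ∧ (γ⁻¹ • P - Pplus).PosSemidef := by
  have hscaled : (γ • P⁻¹).PosDef := hP.inv.smul hγ
  have hrank_one : 0 ≤ vecMulVec q q := by
    simpa [nonneg_iff_posSemidef] using posSemidef_vecMulVec_self_star q
  have hle : γ • P⁻¹ ≤ γ • P⁻¹ + vecMulVec q q := le_add_of_nonneg_right hrank_one
  have hPplus_pos : Pplus.PosDef := by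
    simpa [hPplus] using (hscaled.add_posSemidef hrank_one).inv
  refine ⟨hPplus_pos, isHermitian_iff_isSymm.mp hPplus_pos.isHermitian, ?_⟩
  have hscaled_inv : (γ • P⁻¹)⁻¹ = γ⁻¹ • P := by
    have := invertibleOfNonzero hγ.ne'
    rw [inv_smul _ γ hP.inv.det_pos.ne'.isUnit, nonsing_inv_nonsing_inv _ hP.det_pos.ne'.isUnit,
      invOf_eq_inv]
  rw [← le_iff, hPplus, ← hscaled_inv]
  exact hscaled.inv_le_inv hle

/-- The RLS covariance update preserves positive definiteness and
`P₊ ⪯ γ⁻¹·P` in the Loewner order. -/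
theorem rls_covariance_update_loewner
    {n : ℕ} (P Pplus : Matrix (Fin n) (Fin n) ℝ) (q : Fin n → ℝ) (γ : ℝ)
    (hP : P.PosDef) (hPs : P.IsSymm) (hγ : 0 < γ)
    (hPplus : Pplus = (γ • P⁻¹ + Matrix.vecMulVec q q)⁻¹) :
    Pplus.PosDef ∧ Pplus.IsSymm ∧ (γ⁻¹ • P - Pplus).PosSemidef :=
  rls_covariance_update_loewner_general P Pplus q γ hP hγ hPplus
end
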